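/- Let d ≥ 1 and A ⊆ ℤ^d. Then the limits lim_{i→∞} d_(A_{[i]}), lim_{i→∞} d_(A^{[i]}), and lim_{i→∞} d_(A + [-i,i]^d) all exist and are equal. -/

import Mathlib

open Filter Pointwise

/-- The `d`-dimensional cube `[-m, m]^d` in `ℤ^d`. -/
def cube (d m : ℕ) : Set (Fin d → ℤ) :=
  Set.Icc (fun _ => -(m : ℤ)) (fun _ => (m : ℤ))

/-- The `n`-block set `A_{[n]} = {x : (n·x + [0, n-1]^d) ∩ A ≠ ∅}`. -/
def blockSet (d : ℕ) (A : Set (Fin d → ℤ)) (n : ℕ) : Set (Fin d → ℤ) :=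
  {x | ∃ t ∈ Set.Icc (0 : Fin d → ℤ) (fun _ => (n : ℤ) - 1), (n : ℤ) • x + t ∈ A}

/-- The set `A^{[n]} = n·A_{[n]} + [0, n-1]^d`. -/
def superBlockSet (d : ℕ) (A : Set (Fin d → ℤ)) (n : ℕ) : Set (Fin d → ℤ) :=
  {w | ∃ x ∈ blockSet d A n,
    ∃ t ∈ Set.Icc (0 : Fin d → ℤ) (fun _ => (n : ℤ) - 1), w = (n : ℤ) • x + t}

/-- Lower asymptotic density of `A ⊆ ℤ^d`. -/
noncomputable def lowerDensity (d : ℕ) (A : Set (Fin d → ℤ)) : ℝ :=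
  liminf (fun n : ℕ => (Set.ncard (A ∩ cube d n) : ℝ) / (2 * (n : ℝ) + 1) ^ d) atTop

/-!
Write `g m` for the lower density of `A + [-m, m]^d`. It is monotone in `m` and at most `1`,
so it converges to `L = sup g`. Since `A^{[n]} ⊆ A + [-n, n]^d`, the densities of `A^{[n]}`
stay below `L`. Counting disjoint blocks gives `d_(A_{[n]}) ≤ d_(A^{[n]})`, and covering
`A + [-m, m]^d` by the enlarged blocks `n x + [-m, n - 1 + m]^d`, `x ∈ A_{[n]}`, gives
`g m ≤ (1 + 2m/n)^d d_(A_{[n]})`. Letting `n → ∞` squeezes both block densities to `L`.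
-/

open Topology Set

lemma Set.ncard_image2_le {α β γ : Type*} {f : α → β → γ} {s : Set α} {t : Set β}
    (hs : s.Finite) (ht : t.Finite) : (image2 f s t).ncard ≤ s.ncard * t.ncard := by
  rw [← image_uncurry_prod, ← ncard_prod]
  exact ncard_image_le (hs.prod ht)

lemma Set.ncard_image2 {α β γ : Type*} {f : α → β → γ} {s : Set α} {t : Set β}
    (hf : InjOn (Function.uncurry f) (s ×ˢ t)) : (image2 f s t).ncard = s.ncard * t.ncard := by
  rw [← image_uncurry_prod, hf.ncard_image, ncard_prod]

theorem liminf_le_mul_liminf_of_comp_le {u v c : ℕ → ℝ} {φ : ℕ → ℕ} {c₀ : ℝ}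
    (hu : BddBelow (range u)) (hu' : BddAbove (range u))
    (hv : 0 ≤ v) (hv' : BddAbove (range v))
    (hφ : Tendsto φ atTop atTop) (hc : Tendsto c atTop (𝓝 c₀)) (hc₀ : 0 ≤ᶠ[atTop] c)
    (h : ∀ᶠ N in atTop, u (φ N) ≤ c N * v N) :
    liminf u atTop ≤ c₀ * liminf v atTop := by
  have hv₀ : 0 ≤ᶠ[atTop] v := Eventually.of_forall hv
  have hvc : IsCoboundedUnder (· ≥ ·) atTop v := hv'.isBoundedUnder_of_range.isCoboundedUnder_ge
  calc liminf u atTop ≤ liminf (u ∘ φ) atTop :=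
        hφ.liminf_le_liminf_comp hu'.isBoundedUnder_of_range.isCoboundedUnder_ge
          hu.isBoundedUnder_of_range
    _ ≤ liminf (c * v) atTop :=
        liminf_le_liminf h ((hu.mono (range_comp_subset_range φ u)).isBoundedUnder_of_range)
          (isCoboundedUnder_ge_mul_of_nonneg hc₀ hc.isBoundedUnder_le hv₀ hvc)
    _ ≤ limsup c atTop * liminf v atTop := liminf_mul_le hc₀ hc.isBoundedUnder_le hv₀ hvc
    _ = c₀ * liminf v atTop := by rw [hc.limsup_eq]

lemma tendsto_ratio_affine {r : ℝ} (hr : 0 < r) (C : ℝ) :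
    Tendsto (fun N : ℕ => (2 * (N : ℝ) + 1) / (2 * (r * N - C) + 1)) atTop (𝓝 r⁻¹) := by
  have h := tendsto_inv_atTop_zero.comp (tendsto_natCast_atTop_atTop (R := ℝ))
  have key : Tendsto (fun N : ℕ => (2 + (N : ℝ)⁻¹) / (2 * r + (1 - 2 * C) * (N : ℝ)⁻¹)) atTop
      (𝓝 ((2 + 0) / (2 * r + (1 - 2 * C) * 0))) :=
    (tendsto_const_nhds.add h).div (tendsto_const_nhds.add (h.const_mul _)) (by simp [hr.ne'])
  rw [show (2 + 0) / (2 * r + (1 - 2 * C) * 0) = r⁻¹ by simp [field]] at key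
  refine key.congr' ?_
  filter_upwards [eventually_gt_atTop 0] with N hN
  have : (N : ℝ) ≠ 0 := by positivity
  field_simp
  ring

lemma tendsto_of_le_of_forall_le_mul {x g : ℕ → ℝ} {c : ℕ → ℕ → ℝ} {L : ℝ}
    (hg : Tendsto g atTop (𝓝 L)) (hxL : ∀ᶠ n in atTop, x n ≤ L)
    (hc : ∀ m, Tendsto (c m) atTop (𝓝 1)) (hgx : ∀ m, ∀ᶠ n in atTop, g m ≤ c m n * x n) :
    Tendsto x atTop (𝓝 L) := by
  refine tendsto_order.2 ⟨fun a ha => ?_, fun b hb => hxL.mono fun n hn => hn.trans_lt hb⟩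
  obtain ⟨m, hm⟩ := (hg.eventually (lt_mem_nhds ha)).exists
  have hca : ∀ᶠ n in atTop, c m n * a < g m :=
    ((hc m).mul_const a).eventually (gt_mem_nhds (by rwa [one_mul]))
  filter_upwards [hca, hgx m, (hc m).eventually (lt_mem_nhds one_pos)] with n h₁ h₂ h₃
  exact lt_of_mul_lt_mul_left (h₁.trans_le h₂) h₃.le

noncomputable def cubeDensity (d : ℕ) (A : Set (Fin d → ℤ)) (N : ℕ) : ℝ :=
  (A ∩ cube d N).ncard / (2 * (N : ℝ) + 1) ^ d

section Cubes
variable {d : ℕ}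

lemma mem_cube {m : ℕ} {x : Fin d → ℤ} : x ∈ cube d m ↔ ∀ j, -(m : ℤ) ≤ x j ∧ x j ≤ m := by
  simp [cube, Pi.le_def, forall_and]

lemma cube_mono {m m' : ℕ} (h : m ≤ m') : cube d m ⊆ cube d m' := by
  have : (m : ℤ) ≤ m' := by exact_mod_cast h
  exact Icc_subset_Icc (fun _ => by simpa using this) (fun _ => this)

lemma cube_finite (d m : ℕ) : (cube d m).Finite := finite_Icc _ _

lemma ncard_Icc_const (a b : ℤ) :
    (Icc (fun _ : Fin d => a) (fun _ => b)).ncard = (b + 1 - a).toNat ^ d := by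
  rw [← Finset.coe_Icc, Set.ncard_coe_finset, Pi.card_Icc]
  simp [Int.card_Icc]

lemma ncard_cube (m : ℕ) : (cube d m).ncard = (2 * m + 1) ^ d := by
  rw [cube, ncard_Icc_const]
  congr 1
  omega

lemma cubeDensity_nonneg (A : Set (Fin d → ℤ)) : 0 ≤ cubeDensity d A := fun _ => by
  unfold cubeDensity; positivity

lemma cubeDensity_le_one (A : Set (Fin d → ℤ)) (N : ℕ) : cubeDensity d A N ≤ 1 := by
  rw [cubeDensity, div_le_one (by positivity)]
  have := ncard_le_ncard (inter_subset_right (s := A)) (cube_finite d N)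
  rw [ncard_cube] at this
  exact_mod_cast this

lemma cubeDensity_mono {A B : Set (Fin d → ℤ)} (h : A ⊆ B) (N : ℕ) :
    cubeDensity d A N ≤ cubeDensity d B N := by
  unfold cubeDensity
  gcongr
  exact (cube_finite d N).inter_of_right _

lemma bddAbove_range_cubeDensity (A : Set (Fin d → ℤ)) : BddAbove (range (cubeDensity d A)) :=
  ⟨1, forall_mem_range.2 (cubeDensity_le_one A)⟩

lemma bddBelow_range_cubeDensity (A : Set (Fin d → ℤ)) : BddBelow (range (cubeDensity d A)) :=
  ⟨0, forall_mem_range.2 (cubeDensity_nonneg A)⟩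

lemma lowerDensity_mono {A B : Set (Fin d → ℤ)} (h : A ⊆ B) : lowerDensity d A ≤ lowerDensity d B :=
  liminf_le_liminf (Eventually.of_forall (cubeDensity_mono h))
    (bddBelow_range_cubeDensity A).isBoundedUnder_of_range
    (bddAbove_range_cubeDensity B).isBoundedUnder_of_range.isCoboundedUnder_ge

lemma lowerDensity_le_one (A : Set (Fin d → ℤ)) : lowerDensity d A ≤ 1 :=
  liminf_le_of_frequently_le (Frequently.of_forall (cubeDensity_le_one A))
    (bddBelow_range_cubeDensity A).isBoundedUnder_of_range

end Cubes

theorem lowerDensity_le_of_ncard_le {d : ℕ} {A B : Set (Fin d → ℤ)} {φ : ℕ → ℕ} {r C k : ℝ}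
    (hr : 0 < r) (hk : 0 ≤ k) (hφ : ∀ N, r * N ≤ φ N + C)
    (h : ∀ᶠ N in atTop, ((A ∩ cube d (φ N)).ncard : ℝ) ≤ k * (B ∩ cube d N).ncard) :
    lowerDensity d A ≤ k / r ^ d * lowerDensity d B := by
  set c : ℕ → ℝ := fun N => k * ((2 * N + 1) / (2 * (r * N - C) + 1)) ^ d
  have hc : Tendsto c atTop (𝓝 (k / r ^ d)) := by
    simpa [c, div_eq_mul_inv, inv_pow] using ((tendsto_ratio_affine hr C).pow d).const_mul k
  have hrN : Tendsto (fun N : ℕ => r * N) atTop atTop :=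
    tendsto_natCast_atTop_atTop.const_mul_atTop hr
  have hpos : ∀ᶠ N : ℕ in atTop, 0 < 2 * (r * N - C) + 1 :=
    (hrN.eventually_gt_atTop C).mono fun N hN => by linarith
  have hφ' : Tendsto φ atTop atTop := by
    refine tendsto_natCast_atTop_iff.1
      (tendsto_atTop_mono (fun N => ?_) (tendsto_atTop_add_const_right _ (-C) hrN))
    linarith [hφ N]
  have hcomp : ∀ᶠ N in atTop, cubeDensity d A (φ N) ≤ c N * cubeDensity d B N := by
    filter_upwards [h, hpos] with N hN hN'
    calc cubeDensity d A (φ N)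
        ≤ k * (B ∩ cube d N).ncard / (2 * (r * N - C) + 1) ^ d := by
          refine div_le_div₀ (by positivity) hN (by positivity) (pow_le_pow_left₀ hN'.le ?_ d)
          linarith [hφ N]
      _ = c N * cubeDensity d B N := by
          have := hN'.ne'
          simp only [c, cubeDensity, div_pow]
          field_simp
  exact liminf_le_mul_liminf_of_comp_le (bddBelow_range_cubeDensity A)
    (bddAbove_range_cubeDensity A) (cubeDensity_nonneg B) (bddAbove_range_cubeDensity B) hφ' hc
    (hpos.mono fun N hN => mul_nonneg hk (pow_nonneg (div_nonneg (by positivity) hN.le) d)) hcomp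

lemma mem_Icc_iff_forall {d : ℕ} {lo hi x : Fin d → ℤ} :
    x ∈ Icc lo hi ↔ ∀ j, lo j ≤ x j ∧ x j ≤ hi j := by
  simp [Pi.le_def, forall_and]

lemma ncard_Icc_zero_sub_one (d n : ℕ) :
    (Icc (0 : Fin d → ℤ) fun _ => (n : ℤ) - 1).ncard = n ^ d := by
  rw [show (0 : Fin d → ℤ) = fun _ => 0 from rfl, ncard_Icc_const]
  congr 1
  omega

section Blocks
variable {d n : ℕ} {A : Set (Fin d → ℤ)}

lemma superBlockSet_eq_image2 :
    superBlockSet d A n = image2 (fun x t => (n : ℤ) • x + t) (blockSet d A n)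
      (Icc 0 fun _ => (n : ℤ) - 1) := by
  ext w
  simp only [superBlockSet, mem_image2, mem_ofPred_eq, eq_comm]

lemma injOn_uncurry_smul_add (hn : 0 < n) (s : Set (Fin d → ℤ)) :
    InjOn (Function.uncurry fun x t : Fin d → ℤ => (n : ℤ) • x + t)
      (s ×ˢ Icc 0 fun _ => (n : ℤ) - 1) := by
  rintro ⟨x, t⟩ ⟨-, ht₀, ht₁⟩ ⟨x', t'⟩ ⟨-, ht₀', ht₁'⟩ h
  have hn' : (0 : ℤ) < n := by exact_mod_cast hn
  have divMod (y s : ℤ) (h₀ : 0 ≤ s) (h₁ : s ≤ n - 1) : (n * y + s) / n = y ∧ (n * y + s) % n = s :=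
    (Int.ediv_emod_unique hn').2 ⟨by ring, h₀, by linarith⟩
  have key : ∀ j, x j = x' j ∧ t j = t' j := fun j => by
    have hj := congrFun h j
    simp only [Function.uncurry_apply_pair, Pi.add_apply, Pi.smul_apply, smul_eq_mul] at hj
    obtain ⟨hx, ht⟩ := divMod (x j) (t j) (ht₀ j) (ht₁ j)
    obtain ⟨hx', ht'⟩ := divMod (x' j) (t' j) (ht₀' j) (ht₁' j)
    rw [hj] at hx ht
    exact ⟨hx.symm.trans hx', ht.symm.trans ht'⟩
  exact Prod.ext (funext fun j => (key j).1) (funext fun j => (key j).2)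

lemma superBlockSet_subset_add_cube : superBlockSet d A n ⊆ A + cube d n := by
  rintro _ ⟨x, ⟨t', ht', ha⟩, t, ht, rfl⟩
  refine ⟨_, ha, t - t', ?_, add_add_sub_cancel _ _ _⟩
  simp only [mem_Icc_iff_forall, Pi.zero_apply] at ht ht'
  rw [mem_cube]
  intro j
  simp only [Pi.sub_apply]
  constructor <;> linarith [ht j, ht' j]

lemma pow_mul_ncard_blockSet_inter_cube_le (hn : 0 < n) {M N : ℕ} (h : n * M + n ≤ N) :
    n ^ d * (blockSet d A n ∩ cube d M).ncard ≤ (superBlockSet d A n ∩ cube d N).ncard := by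
  have hN : (n : ℤ) * M + n ≤ N := by exact_mod_cast h
  have hsub : image2 (fun x t => (n : ℤ) • x + t) (blockSet d A n ∩ cube d M)
      (Icc 0 fun _ => (n : ℤ) - 1) ⊆ superBlockSet d A n ∩ cube d N := by
    rintro _ ⟨x, ⟨hx, hxM⟩, t, ht, rfl⟩
    refine ⟨superBlockSet_eq_image2 ▸ mem_image2_of_mem hx ht, ?_⟩
    simp only [mem_Icc_iff_forall, Pi.zero_apply] at ht
    rw [mem_cube] at hxM ⊢
    intro j
    simp only [Pi.add_apply, Pi.smul_apply, smul_eq_mul]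
    have := hxM j
    have := ht j
    constructor <;> nlinarith
  calc n ^ d * (blockSet d A n ∩ cube d M).ncard
      = (image2 (fun x t => (n : ℤ) • x + t) (blockSet d A n ∩ cube d M)
          (Icc 0 fun _ => (n : ℤ) - 1)).ncard := by
        rw [ncard_image2 (injOn_uncurry_smul_add hn _), ncard_Icc_zero_sub_one, mul_comm]
    _ ≤ (superBlockSet d A n ∩ cube d N).ncard :=
        ncard_le_ncard hsub ((cube_finite d N).inter_of_right _)

lemma exists_eq_smul_add_mem_Icc (hn : 0 < n) (a : Fin d → ℤ) :
    ∃ x, ∃ r ∈ Icc (0 : Fin d → ℤ) (fun _ => (n : ℤ) - 1), a = (n : ℤ) • x + r := by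
  have hn' : (0 : ℤ) < n := by exact_mod_cast hn
  refine ⟨fun j => a j / n, fun j => a j % n, ?_, funext fun j => (Int.mul_ediv_add_emod _ _).symm⟩
  rw [mem_Icc_iff_forall]
  exact fun j => ⟨Int.emod_nonneg _ hn'.ne', by linarith [Int.emod_lt_of_pos (a j) hn']⟩

lemma ncard_add_cube_inter_cube_le (hn : 0 < n) {m N K : ℕ} (h : N + m ≤ n * K) :
    ((A + cube d m) ∩ cube d N).ncard ≤ (n + 2 * m) ^ d * (blockSet d A n ∩ cube d K).ncard := by
  have hK : (N : ℤ) + m ≤ n * K := by exact_mod_cast h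
  have hsub : (A + cube d m) ∩ cube d N ⊆ image2 (fun x t => (n : ℤ) • x + t)
      (blockSet d A n ∩ cube d K) (Icc (fun _ => -(m : ℤ)) fun _ => (n : ℤ) - 1 + m) := by
    rintro _ ⟨⟨a, ha, s, hs, rfl⟩, hN⟩
    obtain ⟨x, r, hr, rfl⟩ := exists_eq_smul_add_mem_Icc hn a
    have hr' : ∀ j, 0 ≤ r j ∧ r j ≤ n - 1 := mem_Icc_iff_forall.1 hr
    rw [mem_cube] at hs hN
    refine ⟨x, ⟨⟨r, hr, ha⟩, mem_cube.2 fun j => ?_⟩, r + s, mem_Icc_iff_forall.2 fun j => ?_,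
      (add_assoc _ _ _).symm⟩
    · have hw := hN j
      simp only [Pi.add_apply, Pi.smul_apply, smul_eq_mul] at hw
      constructor <;> nlinarith [hr' j, hs j]
    · simp only [Pi.add_apply]
      constructor <;> linarith [hr' j, hs j]
  calc ((A + cube d m) ∩ cube d N).ncard
      ≤ (image2 (fun x t => (n : ℤ) • x + t) (blockSet d A n ∩ cube d K)
          (Icc (fun _ => -(m : ℤ)) fun _ => (n : ℤ) - 1 + m)).ncard :=
        ncard_le_ncard hsub (((cube_finite d K).inter_of_right _).image2 _ (finite_Icc _ _))
    _ ≤ (blockSet d A n ∩ cube d K).ncard * (n + 2 * m) ^ d := by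
        refine (ncard_image2_le ((cube_finite d K).inter_of_right _) (finite_Icc _ _)).trans ?_
        rw [ncard_Icc_const]
        exact le_of_eq (by congr 2; omega)
    _ = _ := mul_comm _ _

end Blocks

section Densities
variable {d n : ℕ} {A : Set (Fin d → ℤ)}

lemma lowerDensity_blockSet_le (hn : 0 < n) :
    lowerDensity d (blockSet d A n) ≤ lowerDensity d (superBlockSet d A n) := by
  have hn' : (0 : ℝ) < n := by exact_mod_cast hn
  have key := lowerDensity_le_of_ncard_le (A := blockSet d A n) (B := superBlockSet d A n)
    (φ := fun N => (N - n) / n) (C := 2) (k := ((n : ℝ) ^ d)⁻¹) (inv_pos.2 hn') (by positivity)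
    (fun N => ?_) ?_
  · rwa [inv_pow, div_self (by positivity), one_mul] at key
  · have h₁ := Nat.div_add_mod (N - n) n
    have h₂ := Nat.mod_lt (N - n) hn
    have : N ≤ n * ((N - n) / n + 2) := by rw [Nat.mul_add]; omega
    rw [inv_mul_le_iff₀ hn']
    exact_mod_cast this
  · filter_upwards [eventually_ge_atTop n] with N hN
    rw [le_inv_mul_iff₀ (by positivity)]
    have := Nat.mul_div_le (N - n) n
    exact_mod_cast pow_mul_ncard_blockSet_inter_cube_le hn (by omega)

lemma lowerDensity_add_cube_le (hn : 0 < n) (m : ℕ) :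
    lowerDensity d (A + cube d m) ≤ (1 + 2 * m / n) ^ d * lowerDensity d (blockSet d A n) := by
  have hn' : (0 : ℝ) < n := by exact_mod_cast hn
  have key := lowerDensity_le_of_ncard_le (A := A + cube d m) (B := blockSet d A n)
    (φ := fun K => n * K - m) (C := m) (k := ((n + 2 * m : ℕ) : ℝ) ^ d) hn' (by positivity)
    (fun K => ?_) ?_
  · convert key using 2
    rw [← div_pow]
    congr 1
    field_simp
    push_cast
    ring
  · have : n * K ≤ n * K - m + m := by omega
    exact_mod_cast this
  · filter_upwards [eventually_ge_atTop m] with K hK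
    have := Nat.le_mul_of_pos_left K hn
    exact_mod_cast ncard_add_cube_inter_cube_le hn (by omega)

end Densities

theorem stmt_14_general (d : ℕ) (A : Set (Fin d → ℤ)) :
    ∃ L : ℝ,
      Tendsto (fun i : ℕ => lowerDensity d (blockSet d A i)) atTop (nhds L) ∧
      Tendsto (fun i : ℕ => lowerDensity d (superBlockSet d A i)) atTop (nhds L) ∧
      Tendsto (fun i : ℕ => lowerDensity d (A + cube d i)) atTop (nhds L) := by
  set g : ℕ → ℝ := fun i => lowerDensity d (A + cube d i)
  have hbdd : BddAbove (range g) := ⟨1, forall_mem_range.2 fun i => lowerDensity_le_one _⟩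
  have hg : Tendsto g atTop (𝓝 (⨆ i, g i)) := tendsto_atTop_ciSup
    (fun i j hij => lowerDensity_mono (add_subset_add_left (cube_mono hij))) hbdd
  have hSL (n : ℕ) : lowerDensity d (superBlockSet d A n) ≤ ⨆ i, g i :=
    (lowerDensity_mono superBlockSet_subset_add_cube).trans (le_ciSup hbdd n)
  have hXS : ∀ᶠ n in atTop,
      lowerDensity d (blockSet d A n) ≤ lowerDensity d (superBlockSet d A n) :=
    (eventually_gt_atTop 0).mono fun n hn => lowerDensity_blockSet_le hn
  have hX : Tendsto (fun n => lowerDensity d (blockSet d A n)) atTop (𝓝 (⨆ i, g i)) :=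
    tendsto_of_le_of_forall_le_mul hg (hXS.mono fun n hn => hn.trans (hSL n))
      (c := fun m n => (1 + 2 * m / n) ^ d)
      (fun m => by
        simpa using ((tendsto_const_div_atTop_nhds_zero_nat (2 * m : ℝ)).const_add 1).pow d)
      (fun m => (eventually_gt_atTop 0).mono fun n hn => lowerDensity_add_cube_le hn m)
  exact ⟨_, hX, tendsto_of_tendsto_of_tendsto_of_le_of_le' hX tendsto_const_nhds hXS
    (Eventually.of_forall hSL), hg⟩

theorem stmt_14 (d : ℕ) (hd : 1 ≤ d) (A : Set (Fin d → ℤ)) :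
    ∃ L : ℝ,
      Tendsto (fun i : ℕ => lowerDensity d (blockSet d A i)) atTop (nhds L) ∧
      Tendsto (fun i : ℕ => lowerDensity d (superBlockSet d A i)) atTop (nhds L) ∧
      Tendsto (fun i : ℕ => lowerDensity d (A + cube d i)) atTop (nhds L) :=
  stmt_14_general d A
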